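/- Let A be a C*-algebra and I a σ-unital, stable C*-algebra, and fix isometries s₁, s₂ ∈ M(I) with s₁s₁* + s₂s₂* = 1. A *-homomorphism φ : A → Q(I) is absorbing if and only if its forced unitization φ† : A† → Q(I) is unitally absorbing. -/
import Mathlib


/-!
STATEMENT 14: Let `I` be a σ-unital, stable C*-algebra and fix isometries `s₁, s₂ ∈ M(I)`
with `s₁s₁* + s₂s₂* = 1`.  A *-homomorphism `φ : A → Q(I)` is absorbing iff its forced
unitization `φ† : A† → Q(I)` is unitally absorbing.

`M(I)` is the multiplier algebra `DoubleCentralizer ℂ I`.  The corona algebra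
`Q(I) = M(I)/I` is encoded abstractly: a unital C*-algebra `Q` with a surjective unital
*-homomorphism `πI : M(I) → Q` whose kernel is exactly the canonical image of `I`.
The forced unitization `φ†` is encoded by evaluating on pairs: `φ†(a + λ1) = φ(a) + λ1`,
and a unital *-homomorphism `ψ' : A† → M(I)` is encoded by its restriction
`ψ : A → M(I)` via `ψ'(a + λ1) = ψ(a) + λ1`.
-/

noncomputable section

/-- A subset `C` of a C*-algebra satisfies the Hjelmborg–Rørdam criterion (for σ-unital
algebras this is equivalent to stability). -/
def HRCriterion {E : Type*} [NonUnitalCStarAlgebra E] (C : Set E) : Prop :=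
  ∀ x ∈ C, (∃ c : E, x = star c * c) → ∀ ε > (0 : ℝ),
    ∃ y ∈ C, ‖x - y * star y‖ < ε ∧ ‖(y * star y) * (star y * y)‖ < ε

theorem statement14
    {A I Q : Type*} [NonUnitalCStarAlgebra A] [NonUnitalCStarAlgebra I] [CStarAlgebra Q]
    -- `I` is σ-unital and stable
    (hσ : ∃ h : I, (∃ c : I, h = star c * c) ∧
      closure {z : I | ∃ a : I, z = h * a * h} = Set.univ)
    (hstable : HRCriterion (Set.univ : Set I))
    -- the corona algebra `Q = Q(I) = M(I)/I`, encoded abstractly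
    (πI : DoubleCentralizer ℂ I →⋆ₐ[ℂ] Q) (hπsurj : Function.Surjective πI)
    (hπker : ∀ m : DoubleCentralizer ℂ I,
      πI m = 0 ↔ ∃ a : I, m = DoubleCentralizer.coe ℂ a)
    -- fixed isometries `s₁, s₂ ∈ M(I)` with `s₁s₁* + s₂s₂* = 1`
    (s₁ s₂ : DoubleCentralizer ℂ I)
    (hs₁ : star s₁ * s₁ = 1) (hs₂ : star s₂ * s₂ = 1)
    (hsum : s₁ * star s₁ + s₂ * star s₂ = 1)
    -- the *-homomorphism `φ : A → Q(I)`
    (φ : A →⋆ₙₐ[ℂ] Q) :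
    -- `φ` is absorbing:
    ((∀ ψ : A →⋆ₙₐ[ℂ] DoubleCentralizer ℂ I,
        ∃ u : DoubleCentralizer ℂ I, star u * u = 1 ∧ u * star u = 1 ∧
          ∀ a : A,
            πI s₁ * φ a * star (πI s₁) + πI s₂ * πI (ψ a) * star (πI s₂) =
              πI u * φ a * star (πI u))
    ↔
    -- `φ† : A† → Q(I)` is unitally absorbing (unital maps `A† → M(I)` correspond to
    -- *-homomorphisms `ψ : A → M(I)` via `a + λ1 ↦ ψ(a) + λ1`):
    (∀ ψ : A →⋆ₙₐ[ℂ] DoubleCentralizer ℂ I,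
        ∃ u : DoubleCentralizer ℂ I, star u * u = 1 ∧ u * star u = 1 ∧
          ∀ (a : A) (lam : ℂ),
            πI s₁ * (φ a + lam • (1 : Q)) * star (πI s₁) +
              πI s₂ * πI (ψ a + lam • (1 : DoubleCentralizer ℂ I)) * star (πI s₂) =
            πI u * (φ a + lam • (1 : Q)) * star (πI u))) := by
  constructor
  · intro h ψ
    obtain ⟨u, hu1, hu2, hu⟩ := h ψ
    refine ⟨u, hu1, hu2, fun a lam => ?_⟩
    have huu : πI u * star (πI u) = 1 := by
      rw [← map_star, ← map_mul, hu2, map_one]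
    have hss : πI s₁ * star (πI s₁) + πI s₂ * star (πI s₂) = 1 := by
      rw [← map_star, ← map_star, ← map_mul, ← map_mul, ← map_add, hsum, map_one]
    calc πI s₁ * (φ a + lam • (1 : Q)) * star (πI s₁) +
          πI s₂ * πI (ψ a + lam • (1 : DoubleCentralizer ℂ I)) * star (πI s₂)
        = (πI s₁ * φ a * star (πI s₁) + πI s₂ * πI (ψ a) * star (πI s₂)) +
            lam • (πI s₁ * star (πI s₁) + πI s₂ * star (πI s₂)) := by
          simp only [map_add, map_smul, map_one, mul_add, add_mul, mul_one, one_mul,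
            mul_smul_comm, smul_mul_assoc, smul_add]
          abel
      _ = πI u * φ a * star (πI u) + lam • (πI u * star (πI u)) := by
          rw [hu a, hss, huu]
      _ = πI u * (φ a + lam • (1 : Q)) * star (πI u) := by
          simp only [mul_add, add_mul, mul_one, one_mul, mul_smul_comm, smul_mul_assoc]
  · intro h ψ
    obtain ⟨u, hu1, hu2, hu⟩ := h ψ
    refine ⟨u, hu1, hu2, fun a => ?_⟩
    have := hu a 0
    simpa using this
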